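/- arXiv:2411.16414 — 2 statements merged into one kernel-verified Lean document; each statement's English description precedes it below -/
import Mathlib

section
/- Let n ≥ 2 and let α satisfy n/3 < α < (n+2)/3. Let u : ℝⁿ → ℝⁿ and θ : ℝⁿ → ℝ be measurable with |u| ∈ L^{2n/(n−α)}(ℝⁿ) and θ ∈ L^{2n/(n−α)}(ℝⁿ). Then there is a constant C depending only on φ, n and α such that for every R > 1 the function x ↦ θ(x)² (u(x) · ∇φ_R(x)) is integrable and |∫_{ℝⁿ} θ(x)² (u(x) · ∇φ_R(x)) dx| ≤ C ‖u‖_{L^{2n/(n−α)}} ‖θ‖²_{L^{2n/(n−α)}} R^{−1 + (3α−n)/2}. In particular, since −1 + (3α−n)/2 < 0, this integral tends to 0 as R → +∞. -/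
open MeasureTheory Filter InnerProductSpace Set Metric
open scoped RealInnerProductSpace ENNReal

section Aux

variable {F : Type*} [NormedAddCommGroup F] [InnerProductSpace ℝ F] [CompleteSpace F]

lemma gradient_comp_smul' (φ : F → ℝ) (hφ : Differentiable ℝ φ) (c : ℝ) (x : F) :
    gradient (fun y => φ (c • y)) x = c • gradient φ (c • x) := by
  have h1 : HasGradientAt φ (gradient φ (c • x)) (c • x) := (hφ (c • x)).hasGradientAt
  have hL : HasFDerivAt (fun y : F => c • y) (c • ContinuousLinearMap.id ℝ F) x :=
    (c • ContinuousLinearMap.id ℝ F).hasFDerivAt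
  have h2 : HasFDerivAt (fun y => φ (c • y))
      ((toDual ℝ F (gradient φ (c • x))).comp (c • ContinuousLinearMap.id ℝ F)) x :=
    h1.hasFDerivAt.comp x hL
  have h3 : (toDual ℝ F (gradient φ (c • x))).comp (c • ContinuousLinearMap.id ℝ F)
      = toDual ℝ F (c • gradient φ (c • x)) := by
    ext v
    simp [real_inner_smul_left, real_inner_smul_right, mul_comm]
  rw [h3] at h2
  have h4 := h2.hasGradientAt.gradient
  rw [LinearIsometryEquiv.symm_apply_apply] at h4
  exact h4

lemma continuous_gradient' (φ : F → ℝ) (hφ : ContDiff ℝ (⊤ : ℕ∞) φ) :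
    Continuous (gradient φ) := by
  have h1 : Continuous (fderiv ℝ φ) := hφ.continuous_fderiv (by simp)
  exact (toDual ℝ F).symm.continuous.comp h1

lemma gradient_zero_of_not_mem_tsupport (φ : F → ℝ) {y : F} (hy : y ∉ tsupport φ) :
    gradient φ y = 0 := by
  have h : fderiv ℝ φ y = 0 := by
    by_contra hne
    exact hy (support_fderiv_subset ℝ (Function.mem_support.mpr hne))
  simp [gradient, h]

end Aux

set_option maxHeartbeats 1000000 in
/-- Case `n/3 < α < (n+2)/3` of the transport-term estimate: if `|u|, θ ∈ L^{2n/(n−α)}(ℝⁿ)`,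
then `|∫ θ² (u · ∇φ_R) dx| ≤ C ‖u‖ ‖θ‖² R^{−1+(3α−n)/2}` with `C = C(φ,n,α)`, and since the
exponent is negative, the integral tends to `0` as `R → ∞`. -/
theorem transport_term_middle_case (n : ℕ) (hn : 2 ≤ n) (α : ℝ)
    (hα1 : (n : ℝ) / 3 < α) (hα2 : α < ((n : ℝ) + 2) / 3)
    (φ : EuclideanSpace ℝ (Fin n) → ℝ)
    (hφ_smooth : ContDiff ℝ (⊤ : ℕ∞) φ) (hφ_supp : HasCompactSupport φ)
    (hφ_nonneg : ∀ x, 0 ≤ φ x) (hφ_le_one : ∀ x, φ x ≤ 1)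
    (hφ_one : ∀ x : EuclideanSpace ℝ (Fin n), ‖x‖ ≤ 1 / 2 → φ x = 1)
    (hφ_zero : ∀ x : EuclideanSpace ℝ (Fin n), 1 ≤ ‖x‖ → φ x = 0)
    (u : EuclideanSpace ℝ (Fin n) → EuclideanSpace ℝ (Fin n))
    (θ : EuclideanSpace ℝ (Fin n) → ℝ)
    (hu : MemLp u (ENNReal.ofReal (2 * n / ((n : ℝ) - α))) volume)
    (hθ : MemLp θ (ENNReal.ofReal (2 * n / ((n : ℝ) - α))) volume) :
    (∃ C : ℝ, 0 < C ∧ ∀ R : ℝ, 1 < R →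
      Integrable (fun x => θ x ^ 2 * ⟪u x, gradient (fun y => φ (R⁻¹ • y)) x⟫) volume ∧
      |∫ x, θ x ^ 2 * ⟪u x, gradient (fun y => φ (R⁻¹ • y)) x⟫|
        ≤ C * (eLpNorm u (ENNReal.ofReal (2 * n / ((n : ℝ) - α))) volume).toReal
            * (eLpNorm θ (ENNReal.ofReal (2 * n / ((n : ℝ) - α))) volume).toReal ^ 2
            * R ^ (-1 + (3 * α - (n : ℝ)) / 2)) ∧
    (-1 + (3 * α - (n : ℝ)) / 2 < 0) ∧
    Tendsto (fun R : ℝ => ∫ x, θ x ^ 2 * ⟪u x, gradient (fun y => φ (R⁻¹ • y)) x⟫)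
      atTop (nhds 0) := by
  -- numeric preliminaries
  have hn1 : (1:ℝ) ≤ (n:ℝ) := by exact_mod_cast Nat.one_le_of_lt hn
  have hn0 : (0:ℝ) < n := by linarith
  have hαn : α < n := by linarith
  have hna : (0:ℝ) < (n:ℝ) - α := by linarith
  have h3a : (0:ℝ) < 3*α - n := by linarith
  set p : ℝ := 2*n/((n:ℝ)-α) with hp_def
  set q : ℝ := 2*n/(3*α-(n:ℝ)) with hq_def
  have hp3 : (3:ℝ) < p := by rw [hp_def, lt_div_iff₀ hna]; nlinarith
  have hp0 : (0:ℝ) < p := by linarith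
  have hq1 : (1:ℝ) < q := by rw [hq_def, lt_div_iff₀ h3a]; nlinarith
  have hq0 : (0:ℝ) < q := by linarith
  have hpinv : p⁻¹ = ((n:ℝ)-α)/(2*n) := by rw [hp_def, inv_div]
  have hqinv : q⁻¹ = (3*α-(n:ℝ))/(2*n) := by rw [hq_def, inv_div]
  have hconj : (p/3).HolderConjugate q := by
    rw [Real.holderConjugate_iff]
    constructor
    · linarith
    · rw [show (p/3)⁻¹ = 3 * p⁻¹ by rw [inv_div]; ring, hpinv, hqinv]
      field_simp
      ring
  have hconj2 : ((3:ℝ)/2).HolderConjugate 3 := by rw [Real.holderConjugate_iff]; constructor <;> norm_num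
  have hnq : (n:ℝ)/q = (3*α-(n:ℝ))/2 := by
    rw [hq_def]; field_simp
  have he_neg : -1 + (3 * α - (n : ℝ)) / 2 < 0 := by linarith
  set e : ℝ := -1 + (3 * α - (n : ℝ)) / 2 with he_def
  set P : ℝ≥0∞ := ENNReal.ofReal (2 * n / ((n : ℝ) - α)) with hP_def
  have hP0 : P ≠ 0 := (ENNReal.ofReal_pos.mpr hp0).ne'
  have hPt : P ≠ ⊤ := ENNReal.ofReal_ne_top
  have hPr : P.toReal = p := ENNReal.toReal_ofReal hp0.le
  -- gradient facts
  have hφdiff : Differentiable ℝ φ := hφ_smooth.differentiable (by simp)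
  have hgradcont : Continuous (gradient φ) := continuous_gradient' φ hφ_smooth
  obtain ⟨M₀, hM₀⟩ := (hφ_supp.fderiv ℝ).exists_bound_of_continuous
    (hφ_smooth.continuous_fderiv (by simp))
  set M : ℝ := |M₀| with hM_def
  have hMnn : 0 ≤ M := abs_nonneg _
  have hM : ∀ y, ‖gradient φ y‖ ≤ M := by
    intro y
    have : ‖gradient φ y‖ = ‖fderiv ℝ φ y‖ := (toDual ℝ _).symm.norm_map _
    rw [this]
    exact (hM₀ y).trans (le_abs_self _)
  have hgrad0 : ∀ y : EuclideanSpace ℝ (Fin n), 1 < ‖y‖ → gradient φ y = 0 := by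
    intro y hy
    apply gradient_zero_of_not_mem_tsupport
    intro h
    have hsub : tsupport φ ⊆ closedBall 0 1 := by
      apply closure_minimal _ isClosed_closedBall
      intro z hz
      simp only [mem_closedBall, dist_zero_right]
      by_contra hc
      push_neg at hc
      exact hz (hφ_zero z hc.le)
    have := hsub h
    simp only [mem_closedBall, dist_zero_right] at this
    linarith
  -- measure constants
  set V0 : ℝ≥0∞ := volume (ball (0:EuclideanSpace ℝ (Fin n)) 1) with hV0_def
  have hV0t : V0 ≠ ⊤ := measure_ball_lt_top.ne
  set V1 : ℝ := (V0 ^ (1/q)).toReal with hV1_def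
  have hV1nn : 0 ≤ V1 := ENNReal.toReal_nonneg
  set C : ℝ := M * V1 + 1 with hC_def
  have hCpos : 0 < C := by positivity
  -- norms
  set Nu : ℝ := (eLpNorm u P volume).toReal with hNu_def
  set Nθ : ℝ := (eLpNorm θ P volume).toReal with hNθ_def
  have hNu0 : 0 ≤ Nu := ENNReal.toReal_nonneg
  have hNθ0 : 0 ≤ Nθ := ENNReal.toReal_nonneg
  -- lintegral norms
  set A : ℝ≥0∞ := ∫⁻ x, (‖u x‖₊ : ℝ≥0∞) ^ p with hA_def
  set B : ℝ≥0∞ := ∫⁻ x, (‖θ x‖₊ : ℝ≥0∞) ^ p with hB_def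
  have hAeq : eLpNorm u P volume = A ^ (1/p) := by
    rw [eLpNorm_eq_lintegral_rpow_enorm_toReal hP0 hPt, hPr, hA_def]; rfl
  have hBeq : eLpNorm θ P volume = B ^ (1/p) := by
    rw [eLpNorm_eq_lintegral_rpow_enorm_toReal hP0 hPt, hPr, hB_def]; rfl
  have hUm : AEMeasurable (fun x => (‖u x‖₊ : ℝ≥0∞)) volume := hu.1.enorm
  have hΘm : AEMeasurable (fun x => (‖θ x‖₊ : ℝ≥0∞)) volume := hθ.1.enorm
  -- main estimate for fixed R
  have key : ∀ R : ℝ, 1 < R →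
      Integrable (fun x => θ x ^ 2 * ⟪u x, gradient (fun y => φ (R⁻¹ • y)) x⟫) volume ∧
      |∫ x, θ x ^ 2 * ⟪u x, gradient (fun y => φ (R⁻¹ • y)) x⟫|
        ≤ C * Nu * Nθ ^ 2 * R ^ e := by
    intro R hR
    have hR0 : (0:ℝ) < R := by linarith
    have hRinn : (0:ℝ) ≤ R⁻¹ := by positivity
    set g : EuclideanSpace ℝ (Fin n) → EuclideanSpace ℝ (Fin n) :=
      fun x => gradient (fun y => φ (R⁻¹ • y)) x with hg_def
    have hgR : ∀ x, g x = R⁻¹ • gradient φ (R⁻¹ • x) := fun x =>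
      gradient_comp_smul' φ hφdiff R⁻¹ x
    have hgcont : Continuous g := by
      have : g = fun x => R⁻¹ • gradient φ (R⁻¹ • x) := funext hgR
      rw [this]
      exact (hgradcont.comp (continuous_const_smul R⁻¹)).const_smul R⁻¹
    have hgbound : ∀ x, ‖g x‖ ≤ R⁻¹ * M := by
      intro x
      rw [hgR, norm_smul, norm_inv, Real.norm_eq_abs, abs_of_pos hR0]
      exact mul_le_mul_of_nonneg_left (hM _) hRinn
    have hgzero : ∀ x : EuclideanSpace ℝ (Fin n), x ∉ closedBall (0:EuclideanSpace ℝ (Fin n)) R →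
        g x = 0 := by
      intro x hx
      simp only [mem_closedBall, dist_zero_right, not_le] at hx
      rw [hgR, hgrad0 _ ?_, smul_zero]
      rw [norm_smul, norm_inv, Real.norm_eq_abs, abs_of_pos hR0]
      rw [lt_inv_mul_iff₀ hR0]
      simpa using hx
    set F : EuclideanSpace ℝ (Fin n) → ℝ :=
      fun x => θ x ^ 2 * ⟪u x, g x⟫ with hF_def
    have hGm : AEMeasurable (fun x => (‖g x‖₊ : ℝ≥0∞)) volume :=
      hgcont.aestronglyMeasurable.enorm
    set G : ℝ≥0∞ := ∫⁻ x, (‖g x‖₊ : ℝ≥0∞) ^ q with hG_def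
    -- pointwise bound
    have hpt : ∀ x, (‖F x‖₊ : ℝ≥0∞) ≤
        ((‖θ x‖₊ : ℝ≥0∞) ^ (2:ℝ) * (‖u x‖₊ : ℝ≥0∞)) * (‖g x‖₊ : ℝ≥0∞) := by
      intro x
      have h1 : ‖F x‖₊ ≤ (‖θ x‖₊ ^ 2 * ‖u x‖₊) * ‖g x‖₊ := by
        rw [hF_def]
        calc ‖θ x ^ 2 * ⟪u x, g x⟫‖₊ = ‖θ x‖₊ ^ 2 * ‖⟪u x, g x⟫‖₊ := by
              rw [nnnorm_mul, nnnorm_pow]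
          _ ≤ ‖θ x‖₊ ^ 2 * (‖u x‖₊ * ‖g x‖₊) :=
              mul_le_mul_of_nonneg_left (nnnorm_inner_le_nnnorm _ _) (by positivity)
          _ = (‖θ x‖₊ ^ 2 * ‖u x‖₊) * ‖g x‖₊ := by ring
      have h2 := ENNReal.coe_le_coe.mpr h1
      push_cast at h2
      rw [show ((2:ℝ)) = ((2:ℕ):ℝ) by norm_num, ENNReal.rpow_natCast]
      exact h2
    -- Hölder
    have H2 : (∫⁻ x, ((‖θ x‖₊ : ℝ≥0∞) ^ (2:ℝ) * (‖u x‖₊ : ℝ≥0∞)) ^ (p/3))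
        ≤ B ^ (2/3 : ℝ) * A ^ (1/3 : ℝ) := by
      have heq : ∀ x, ((‖θ x‖₊ : ℝ≥0∞) ^ (2:ℝ) * (‖u x‖₊ : ℝ≥0∞)) ^ (p/3)
          = ((‖θ x‖₊ : ℝ≥0∞) ^ (2*(p/3))) * ((‖u x‖₊ : ℝ≥0∞) ^ (p/3)) := by
        intro x
        rw [ENNReal.mul_rpow_of_nonneg _ _ (by positivity), ← ENNReal.rpow_mul]
      simp only [heq]
      have hH := ENNReal.lintegral_mul_le_Lp_mul_Lq volume hconj2
        (hΘm.pow_const (2*(p/3))) (hUm.pow_const (p/3))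
      refine le_trans (le_of_eq ?_) (hH.trans (le_of_eq ?_))
      · rfl
      · congr 1
        · congr 1
          · apply lintegral_congr; intro x
            rw [← ENNReal.rpow_mul]
            congr 1
            field_simp
          · norm_num
        · congr 1
          apply lintegral_congr; intro x
          rw [← ENNReal.rpow_mul]
          congr 1
          field_simp
    have H1 : (∫⁻ x, (‖F x‖₊ : ℝ≥0∞))
        ≤ B ^ (2/p : ℝ) * A ^ (1/p : ℝ) * G ^ (1/q : ℝ) := by
      have step1 : (∫⁻ x, (‖F x‖₊ : ℝ≥0∞)) ≤
          ∫⁻ x, ((fun x => (‖θ x‖₊ : ℝ≥0∞) ^ (2:ℝ) * (‖u x‖₊ : ℝ≥0∞)) *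
            (fun x => (‖g x‖₊ : ℝ≥0∞))) x :=
        lintegral_mono fun x => hpt x
      have step2 := ENNReal.lintegral_mul_le_Lp_mul_Lq volume hconj
        ((hΘm.pow_const (2:ℝ)).mul hUm) hGm
      have step3 : (∫⁻ x, ((‖θ x‖₊ : ℝ≥0∞) ^ (2:ℝ) * (‖u x‖₊ : ℝ≥0∞)) ^ (p/3)) ^ (1/(p/3))
          ≤ (B ^ (2/3 : ℝ) * A ^ (1/3 : ℝ)) ^ (1/(p/3)) :=
        ENNReal.rpow_le_rpow H2 (by positivity)
      have step4 : (B ^ (2/3 : ℝ) * A ^ (1/3 : ℝ)) ^ (1/(p/3))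
          = B ^ (2/p : ℝ) * A ^ (1/p : ℝ) := by
        rw [ENNReal.mul_rpow_of_nonneg _ _ (by positivity), ← ENNReal.rpow_mul,
          ← ENNReal.rpow_mul]
        congr 1 <;> [skip; skip] <;> congr 1 <;> field_simp <;> ring
      calc (∫⁻ x, (‖F x‖₊ : ℝ≥0∞)) ≤ _ := step1
        _ ≤ _ := step2
        _ ≤ (B ^ (2/3 : ℝ) * A ^ (1/3 : ℝ)) ^ (1/(p/3)) * G ^ (1/q : ℝ) :=
            mul_le_mul_left step3 _
        _ = B ^ (2/p : ℝ) * A ^ (1/p : ℝ) * G ^ (1/q : ℝ) := by rw [step4]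
    -- bound on G
    have hGle : G ≤ ENNReal.ofReal ((R⁻¹*M)^q) * volume (closedBall (0:EuclideanSpace ℝ (Fin n)) R) := by
      rw [hG_def]
      calc (∫⁻ x, (‖g x‖₊ : ℝ≥0∞) ^ q)
          ≤ ∫⁻ x, (closedBall (0:EuclideanSpace ℝ (Fin n)) R).indicator
              (fun _ => ENNReal.ofReal ((R⁻¹*M)^q)) x := by
            apply lintegral_mono
            intro x
            show ((‖g x‖₊ : ℝ≥0∞)) ^ q ≤ (closedBall (0:EuclideanSpace ℝ (Fin n)) R).indicator
              (fun _ => ENNReal.ofReal ((R⁻¹*M)^q)) x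
            by_cases hx : x ∈ closedBall (0:EuclideanSpace ℝ (Fin n)) R
            · rw [indicator_of_mem hx]
              rw [← enorm_eq_nnnorm, ← ofReal_norm,
                ENNReal.ofReal_rpow_of_nonneg (norm_nonneg _) hq0.le]
              exact ENNReal.ofReal_le_ofReal
                (Real.rpow_le_rpow (norm_nonneg _) (hgbound x) hq0.le)
            · rw [indicator_of_notMem hx]
              simp only [hgzero x hx, nnnorm_zero, ENNReal.coe_zero,
                ENNReal.zero_rpow_of_pos hq0, le_refl]
        _ = ENNReal.ofReal ((R⁻¹*M)^q) * volume (closedBall (0:EuclideanSpace ℝ (Fin n)) R) := by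
            rw [lintegral_indicator measurableSet_closedBall, setLIntegral_const]
    have hvol : volume (closedBall (0:EuclideanSpace ℝ (Fin n)) R)
        = ENNReal.ofReal (R ^ n) * V0 := by
      rw [Measure.addHaar_closedBall volume 0 hR0.le, hV0_def, finrank_euclideanSpace_fin]
    have hGq : G ^ (1/q : ℝ) ≤ ENNReal.ofReal (M * R ^ e) * V0 ^ (1/q : ℝ) := by
      calc G ^ (1/q : ℝ)
          ≤ (ENNReal.ofReal ((R⁻¹*M)^q) * (ENNReal.ofReal (R ^ n) * V0)) ^ (1/q : ℝ) := by
            apply ENNReal.rpow_le_rpow _ (by positivity)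
            rw [← hvol]; exact hGle
        _ = ENNReal.ofReal ((R⁻¹*M)^q) ^ (1/q:ℝ) * (ENNReal.ofReal (R ^ n)) ^ (1/q:ℝ)
              * V0 ^ (1/q : ℝ) := by
            rw [ENNReal.mul_rpow_of_nonneg _ _ (by positivity),
              ENNReal.mul_rpow_of_nonneg _ _ (by positivity)]
            ring
        _ = ENNReal.ofReal (M * R ^ e) * V0 ^ (1/q : ℝ) := by
            congr 1
            rw [ENNReal.ofReal_rpow_of_nonneg (by positivity) (by positivity),
              ENNReal.ofReal_rpow_of_nonneg (by positivity) (by positivity),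
              ← ENNReal.ofReal_mul (by positivity)]
            congr 1
            rw [← Real.rpow_natCast R n, ← Real.rpow_mul hR0.le,
              ← Real.rpow_mul (by positivity), Real.mul_rpow hRinn hMnn]
            rw [mul_one_div_cancel hq0.ne', Real.rpow_one, Real.rpow_one, mul_one_div, hnq,
              he_def, Real.rpow_add hR0, Real.rpow_neg_one]
            ring
    -- combine
    have hmain : (∫⁻ x, (‖F x‖₊ : ℝ≥0∞)) ≤
        B ^ (2/p : ℝ) * A ^ (1/p : ℝ) * (ENNReal.ofReal (M * R ^ e) * V0 ^ (1/q : ℝ)) :=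
      H1.trans (mul_le_mul_right hGq _)
    have hB2 : B ^ (2/p : ℝ) = (eLpNorm θ P volume) ^ (2:ℕ) := by
      rw [hBeq, ← ENNReal.rpow_natCast _ 2, ← ENNReal.rpow_mul]
      congr 1
      push_cast
      ring
    have hmain' : (∫⁻ x, (‖F x‖₊ : ℝ≥0∞)) ≤
        (eLpNorm θ P volume) ^ (2:ℕ) * eLpNorm u P volume
          * (ENNReal.ofReal (M * R ^ e) * V0 ^ (1/q : ℝ)) := by
      rw [← hB2, hAeq]
      exact hmain
    have hRHSfin : (eLpNorm θ P volume) ^ (2:ℕ) * eLpNorm u P volume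
        * (ENNReal.ofReal (M * R ^ e) * V0 ^ (1/q : ℝ)) ≠ ⊤ := by
      apply ENNReal.mul_ne_top (ENNReal.mul_ne_top (ENNReal.pow_ne_top hθ.2.ne) hu.2.ne)
      exact ENNReal.mul_ne_top ENNReal.ofReal_ne_top
        (ENNReal.rpow_lt_top_of_nonneg (by positivity) hV0t).ne
    have hFmeas : AEStronglyMeasurable F volume := by
      have h1 : AEStronglyMeasurable (fun x => ⟪u x, g x⟫) volume :=
        hu.1.inner hgcont.aestronglyMeasurable
      have h2 := (hθ.1.mul hθ.1).mul h1
      simp only [hF_def, pow_two]; exact h2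
    have hInt : Integrable F volume :=
      ⟨hFmeas, hmain'.trans_lt hRHSfin.lt_top⟩
    have habs : |∫ x, F x| ≤ (∫⁻ x, (‖F x‖₊ : ℝ≥0∞)).toReal := by
      rw [← Real.norm_eq_abs]
      refine (norm_integral_le_lintegral_norm F).trans_eq ?_
      congr 1
      simp_rw [ofReal_norm, enorm_eq_nnnorm]
    have htofin := ENNReal.toReal_mono hRHSfin hmain'
    have hrhs : ((eLpNorm θ P volume) ^ (2:ℕ) * eLpNorm u P volume
        * (ENNReal.ofReal (M * R ^ e) * V0 ^ (1/q : ℝ))).toReal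
        = Nθ ^ 2 * Nu * ((M * R ^ e) * V1) := by
      rw [ENNReal.toReal_mul, ENNReal.toReal_mul, ENNReal.toReal_mul, ENNReal.toReal_pow,
        ENNReal.toReal_ofReal (by positivity)]
    have hfinal : |∫ x, F x| ≤ C * Nu * Nθ ^ 2 * R ^ e := by
      refine (habs.trans (htofin.trans_eq hrhs)).trans ?_
      have hMV : M * V1 ≤ C := by rw [hC_def]; linarith
      have h3 : Nθ ^ 2 * Nu * ((M * R ^ e) * V1) = (M * V1) * (Nu * Nθ ^ 2 * R ^ e) := by ring
      have h4 : C * Nu * Nθ ^ 2 * R ^ e = C * (Nu * Nθ ^ 2 * R ^ e) := by ring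
      rw [h3, h4]
      have hRe : (0:ℝ) < R ^ e := Real.rpow_pos_of_pos hR0 _
      exact mul_le_mul_of_nonneg_right hMV (by positivity)
    exact ⟨hInt, hfinal⟩
  refine ⟨⟨C, hCpos, fun R hR => key R hR⟩, he_neg, ?_⟩
  have hb : Tendsto (fun R : ℝ => C * Nu * Nθ ^ 2 * R ^ e) atTop (nhds 0) := by
    have h1 := (tendsto_rpow_neg_atTop (show (0:ℝ) < -e by linarith)).const_mul
      (C * Nu * Nθ ^ 2)
    simp only [neg_neg, mul_zero] at h1
    exact h1
  rw [tendsto_zero_iff_abs_tendsto_zero]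
  apply squeeze_zero' (Eventually.of_forall fun R => abs_nonneg _)
    ((eventually_gt_atTop 1).mono fun R hR => (key R hR).2) hb
end

section
/- Let n ≥ 2. Let u : ℝⁿ → ℝⁿ and θ : ℝⁿ → ℝ be measurable with |u| ∈ L^{3n/(n−1)}(ℝⁿ) and θ ∈ L^{3n/(n−1)}(ℝⁿ). Then for every R > 1 the function x ↦ θ(x)² (u(x) · ∇φ_R(x)) is integrable, satisfies |∫_{ℝⁿ} θ(x)² (u(x) · ∇φ_R(x)) dx| ≤ C ‖u‖_{L^{3n/(n−1)}(ℝⁿ)} ‖θ‖²_{L^{3n/(n−1)}(𝒞_R)} with C depending only on φ and n, and ∫_{ℝⁿ} θ(x)² (u(x) · ∇φ_R(x)) dx → 0 as R → +∞. -/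
open MeasureTheory Filter Metric InnerProductSpace
open scoped RealInnerProductSpace ENNReal


lemma aux_tendsto_measure_norm_ge {E : Type*} [NormedAddCommGroup E] [MeasurableSpace E]
    [OpensMeasurableSpace E] (ν : Measure E) [IsFiniteMeasure ν] :
    Tendsto (fun R : ℝ => ν {x : E | R ≤ ‖x‖}) atTop (nhds 0) := by
  have hmeas : ∀ R : ℝ, NullMeasurableSet {x : E | R ≤ ‖x‖} ν := fun R =>
    (measurableSet_le measurable_const measurable_norm).nullMeasurableSet
  have hanti : Antitone (fun R : ℝ => {x : E | R ≤ ‖x‖}) := fun a b hab x hx => le_trans hab hx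
  have h := tendsto_measure_iInter_atTop hmeas hanti ⟨0, measure_ne_top ν _⟩
  have h0 : (⋂ R : ℝ, {x : E | R ≤ ‖x‖}) = ∅ := by
    ext x
    simp only [Set.mem_iInter, Set.mem_setOf_eq, Set.mem_empty_iff_false, iff_false, not_forall,
      not_le]
    exact ⟨‖x‖ + 1, by linarith⟩
  rw [h0, measure_empty] at h
  exact h


lemma grad_facts {n : ℕ} (φ : EuclideanSpace ℝ (Fin n) → ℝ) (hφ_smooth : ContDiff ℝ (⊤ : ℕ∞) φ)
    (hφ_one : ∀ x : EuclideanSpace ℝ (Fin n), ‖x‖ ≤ 1 / 2 → φ x = 1)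
    (hφ_zero : ∀ x : EuclideanSpace ℝ (Fin n), 1 ≤ ‖x‖ → φ x = 0)
    (M : ℝ) (hM : ∀ y, ‖fderiv ℝ φ y‖ ≤ M) (R : ℝ) (hR0 : 0 < R) :
    (∀ x, ‖gradient (fun y => φ (R⁻¹ • y)) x‖ ≤ R⁻¹ * M) ∧
    (∀ x : EuclideanSpace ℝ (Fin n), (‖x‖ < R / 2 ∨ R < ‖x‖) →
      gradient (fun y => φ (R⁻¹ • y)) x = 0) ∧
    Continuous (gradient (fun y => φ (R⁻¹ • y))) := by
  have hφdiff : Differentiable ℝ φ := hφ_smooth.differentiable (by simp)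
  have hfc : Continuous (fderiv ℝ φ) := hφ_smooth.continuous_fderiv (by simp)
  set L : EuclideanSpace ℝ (Fin n) →L[ℝ] EuclideanSpace ℝ (Fin n) :=
    R⁻¹ • ContinuousLinearMap.id ℝ (EuclideanSpace ℝ (Fin n)) with hL
  have hLnorm : ‖L‖ ≤ R⁻¹ := by
    rw [hL]
    calc ‖R⁻¹ • ContinuousLinearMap.id ℝ (EuclideanSpace ℝ (Fin n))‖
        ≤ ‖R⁻¹‖ * ‖ContinuousLinearMap.id ℝ (EuclideanSpace ℝ (Fin n))‖ :=
          ContinuousLinearMap.opNorm_smul_le _ _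
      _ ≤ R⁻¹ * 1 := by
          rw [Real.norm_eq_abs, abs_of_pos (inv_pos.2 hR0)]
          exact mul_le_mul_of_nonneg_left (ContinuousLinearMap.norm_id_le) (by positivity)
      _ = R⁻¹ := mul_one _
  have hcomp : ∀ x, fderiv ℝ (fun y => φ (R⁻¹ • y)) x = (fderiv ℝ φ (R⁻¹ • x)).comp L := by
    intro x
    have h1 : HasFDerivAt (fun y => φ (R⁻¹ • y)) ((fderiv ℝ φ (R⁻¹ • x)).comp L) x :=
      (hφdiff (R⁻¹ • x)).hasFDerivAt.comp x (L.hasFDerivAt)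
    exact h1.fderiv
  have hgnorm : ∀ x, ‖gradient (fun y => φ (R⁻¹ • y)) x‖
      = ‖fderiv ℝ (fun y => φ (R⁻¹ • y)) x‖ := fun x =>
    LinearIsometryEquiv.norm_map (toDual ℝ (EuclideanSpace ℝ (Fin n))).symm _
  refine ⟨?_, ?_, ?_⟩
  · intro x
    rw [hgnorm, hcomp]
    calc ‖(fderiv ℝ φ (R⁻¹ • x)).comp L‖ ≤ ‖fderiv ℝ φ (R⁻¹ • x)‖ * ‖L‖ :=
        ContinuousLinearMap.opNorm_comp_le _ _
      _ ≤ M * R⁻¹ := by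
          apply mul_le_mul (hM _) hLnorm (by positivity)
          exact le_trans (norm_nonneg _) (hM 0)
      _ = R⁻¹ * M := mul_comm _ _
  · intro x hx
    have hfd0 : fderiv ℝ (fun y => φ (R⁻¹ • y)) x = 0 := by
      rcases hx with hx | hx
      · have hev : (fun y => φ (R⁻¹ • y)) =ᶠ[nhds x] (fun _ => (1 : ℝ)) := by
          have hopen : IsOpen {y : EuclideanSpace ℝ (Fin n) | ‖y‖ < R / 2} :=
            isOpen_lt continuous_norm continuous_const
          filter_upwards [hopen.mem_nhds hx] with y hy
          apply hφ_one
          rw [norm_smul, norm_inv, Real.norm_eq_abs, abs_of_pos hR0]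
          have h2 : R⁻¹ * ‖y‖ ≤ R⁻¹ * (R / 2) := by
            apply mul_le_mul_of_nonneg_left (le_of_lt hy) (by positivity)
          calc R⁻¹ * ‖y‖ ≤ R⁻¹ * (R / 2) := h2
            _ = 1 / 2 := by field_simp
        rw [hev.fderiv_eq]
        exact fderiv_const_apply 1
      · have hev : (fun y => φ (R⁻¹ • y)) =ᶠ[nhds x] (fun _ => (0 : ℝ)) := by
          have hopen : IsOpen {y : EuclideanSpace ℝ (Fin n) | R < ‖y‖} :=
            isOpen_lt continuous_const continuous_norm
          filter_upwards [hopen.mem_nhds hx] with y hy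
          apply hφ_zero
          rw [norm_smul, norm_inv, Real.norm_eq_abs, abs_of_pos hR0]
          rw [le_inv_mul_iff₀ hR0, mul_one]
          exact le_of_lt hy
        rw [hev.fderiv_eq]
        exact fderiv_const_apply 0
    unfold gradient
    rw [hfd0, map_zero]
  · have h1 : Continuous (fun x => fderiv ℝ (fun y => φ (R⁻¹ • y)) x) := by
      simp only [hcomp]
      exact (hfc.comp (continuous_const_smul _)).clm_comp continuous_const
    unfold gradient
    exact ((toDual ℝ (EuclideanSpace ℝ (Fin n))).symm.continuous).comp h1

/-- Case `α = (n+2)/3` (and `(n+2)/3 ≤ α < 2`) of the transport-term estimate: if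
`|u|, θ ∈ L^{3n/(n−1)}(ℝⁿ)`, then for every `R > 1` the integrand `θ² (u · ∇φ_R)` is
integrable, `|∫ θ² (u · ∇φ_R) dx| ≤ C ‖u‖_{L^{3n/(n−1)}(ℝⁿ)} ‖θ‖²_{L^{3n/(n−1)}(𝒞_R)}`
with `C = C(φ,n)` and `𝒞_R = {R/2 ≤ |x| ≤ R}`, and the integral tends to `0` as `R → ∞`. -/
theorem transport_term_annulus_case (n : ℕ) (hn : 2 ≤ n)
    (φ : EuclideanSpace ℝ (Fin n) → ℝ)
    (hφ_smooth : ContDiff ℝ (⊤ : ℕ∞) φ) (hφ_supp : HasCompactSupport φ)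
    (hφ_nonneg : ∀ x, 0 ≤ φ x) (hφ_le_one : ∀ x, φ x ≤ 1)
    (hφ_one : ∀ x : EuclideanSpace ℝ (Fin n), ‖x‖ ≤ 1 / 2 → φ x = 1)
    (hφ_zero : ∀ x : EuclideanSpace ℝ (Fin n), 1 ≤ ‖x‖ → φ x = 0)
    (u : EuclideanSpace ℝ (Fin n) → EuclideanSpace ℝ (Fin n))
    (θ : EuclideanSpace ℝ (Fin n) → ℝ)
    (hu : MemLp u (ENNReal.ofReal (3 * n / ((n : ℝ) - 1))) volume)
    (hθ : MemLp θ (ENNReal.ofReal (3 * n / ((n : ℝ) - 1))) volume) :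
    (∃ C : ℝ, 0 < C ∧ ∀ R : ℝ, 1 < R →
      Integrable (fun x => θ x ^ 2 * ⟪u x, gradient (fun y => φ (R⁻¹ • y)) x⟫) volume ∧
      |∫ x, θ x ^ 2 * ⟪u x, gradient (fun y => φ (R⁻¹ • y)) x⟫|
        ≤ C * (eLpNorm u (ENNReal.ofReal (3 * n / ((n : ℝ) - 1))) volume).toReal
            * (eLpNorm θ (ENNReal.ofReal (3 * n / ((n : ℝ) - 1)))
                (volume.restrict
                  {x : EuclideanSpace ℝ (Fin n) | R / 2 ≤ ‖x‖ ∧ ‖x‖ ≤ R})).toReal ^ 2) ∧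
    Tendsto (fun R : ℝ => ∫ x, θ x ^ 2 * ⟪u x, gradient (fun y => φ (R⁻¹ • y)) x⟫)
      atTop (nhds 0) := by
  classical
  have hn2 : (2 : ℝ) ≤ n := by exact_mod_cast hn
  have hn1 : (1 : ℝ) ≤ (n : ℝ) - 1 := by linarith
  have hnpos : (0 : ℝ) < n := by linarith
  set s : ℝ := 3 * n / ((n : ℝ) - 1) with hs_def
  have hs_pos : 0 < s := div_pos (by linarith) (by linarith)
  have hs1 : (1 : ℝ) < s := by
    rw [hs_def, lt_div_iff₀ (by linarith)]; linarith
  set p : ℝ≥0∞ := ENNReal.ofReal s with hp_def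
  have hp0 : p ≠ 0 := by
    simp only [hp_def, ne_eq, ENNReal.ofReal_eq_zero, not_le]; linarith
  have hpt : p ≠ ⊤ := ENNReal.ofReal_ne_top
  have hpto : p.toReal = s := ENNReal.toReal_ofReal hs_pos.le
  have hsum3 : 3 / s + 1 / (n : ℝ) = 1 := by
    rw [hs_def]
    field_simp
    ring
  -- bound on the derivative of φ
  have hφdiff : Differentiable ℝ φ := hφ_smooth.differentiable (by simp)
  have hfc : Continuous (fderiv ℝ φ) := hφ_smooth.continuous_fderiv (by simp)
  obtain ⟨M, hM⟩ := (hφ_supp.fderiv (𝕜 := ℝ)).exists_bound_of_continuous hfc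
  have hM0 : 0 ≤ M := le_trans (norm_nonneg _) (hM 0)
  set vb : ℝ≥0∞ := (volume (ball (0 : EuclideanSpace ℝ (Fin n)) 1)) ^ (1 / (n : ℝ)) with hvb
  have hvb_ne : vb ≠ ⊤ :=
    (ENNReal.rpow_lt_top_of_nonneg (by positivity) measure_ball_lt_top.ne).ne
  set C : ℝ := M * vb.toReal + 1 with hC
  have hCpos : 0 < C := by positivity
  have hA_ne : eLpNorm u p volume ≠ ⊤ := hu.2.ne
  -- the main estimate, for every R > 1
  have key : ∀ R : ℝ, 1 < R →
      Integrable (fun x => θ x ^ 2 * ⟪u x, gradient (fun y => φ (R⁻¹ • y)) x⟫) volume ∧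
      |∫ x, θ x ^ 2 * ⟪u x, gradient (fun y => φ (R⁻¹ • y)) x⟫|
        ≤ C * (eLpNorm u p volume).toReal
            * (eLpNorm θ p (volume.restrict
                {x : EuclideanSpace ℝ (Fin n) | R / 2 ≤ ‖x‖ ∧ ‖x‖ ≤ R})).toReal ^ 2 := by
    intro R hR
    have hR0 : (0 : ℝ) < R := lt_trans one_pos hR
    obtain ⟨hgb, hgz, hgc⟩ := grad_facts φ hφ_smooth hφ_one hφ_zero M hM R hR0
    set 𝒞 : Set (EuclideanSpace ℝ (Fin n)) := {x | R / 2 ≤ ‖x‖ ∧ ‖x‖ ≤ R} with h𝒞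
    have h𝒞m : MeasurableSet 𝒞 :=
      MeasurableSet.inter (measurableSet_le measurable_const measurable_norm)
        (measurableSet_le measurable_norm measurable_const)
    set ν : Measure (EuclideanSpace ℝ (Fin n)) := volume.restrict 𝒞 with hν
    set A : ℝ≥0∞ := eLpNorm u p volume with hA
    set B : ℝ≥0∞ := eLpNorm θ p ν with hB
    have hB_ne : B ≠ ⊤ :=
      (lt_of_le_of_lt (eLpNorm_mono_measure _ Measure.restrict_le_self) hθ.2).ne
    -- Hölder inequality with four factors
    have hrpow : ∀ x : ℝ≥0∞, (x ^ s) ^ (1 / s : ℝ) = x := by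
      intro x
      rw [← ENNReal.rpow_mul, mul_one_div_cancel hs_pos.ne', ENNReal.rpow_one]
    have step2 : ∫⁻ x, (‖u x‖₊ : ℝ≥0∞) * ((‖θ x‖₊ : ℝ≥0∞) * (‖θ x‖₊ : ℝ≥0∞)) ∂ν
        ≤ A * B * B * (ENNReal.ofReal R * vb) := by
      set f : Fin 4 → EuclideanSpace ℝ (Fin n) → ℝ≥0∞ :=
        ![fun x => (‖u x‖₊ : ℝ≥0∞) ^ s, fun x => (‖θ x‖₊ : ℝ≥0∞) ^ s,
          fun x => (‖θ x‖₊ : ℝ≥0∞) ^ s, fun _ => 1] with hf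
      set e : Fin 4 → ℝ := ![1 / s, 1 / s, 1 / s, 1 / (n : ℝ)] with he
      have hfm : ∀ i ∈ Finset.univ, AEMeasurable (f i) ν := by
        intro i _
        fin_cases i
        · exact (hu.1.restrict.enorm).pow_const s
        · exact (hθ.1.restrict.enorm).pow_const s
        · exact (hθ.1.restrict.enorm).pow_const s
        · exact aemeasurable_const
      have hesum : ∑ i, e i = 1 := by
        have h3 : 1 / s + 1 / s + 1 / s = 3 / s := by ring
        simp only [he, Fin.sum_univ_four, Matrix.cons_val_zero, Matrix.cons_val_one,
          Matrix.head_cons, Matrix.cons_val_two, Matrix.tail_cons, Matrix.cons_val_three]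
        linarith
      have henn : ∀ i ∈ Finset.univ, 0 ≤ e i := by
        intro i _
        fin_cases i
        · show (0:ℝ) ≤ 1 / s; positivity
        · show (0:ℝ) ≤ 1 / s; positivity
        · show (0:ℝ) ≤ 1 / s; positivity
        · show (0:ℝ) ≤ 1 / (n:ℝ); positivity
      have hold := ENNReal.lintegral_prod_norm_pow_le Finset.univ hfm hesum henn
      have hLHS : ∫⁻ a, ∏ i, f i a ^ e i ∂ν
          = ∫⁻ x, (‖u x‖₊ : ℝ≥0∞) * ((‖θ x‖₊ : ℝ≥0∞) * (‖θ x‖₊ : ℝ≥0∞)) ∂ν := by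
        refine lintegral_congr fun a => ?_
        simp only [hf, he, Fin.prod_univ_four, Matrix.cons_val_zero, Matrix.cons_val_one,
          Matrix.head_cons, Matrix.cons_val_two, Matrix.tail_cons, Matrix.cons_val_three,
          hrpow, ENNReal.one_rpow, mul_one]
        ring
      rw [hLHS] at hold
      refine le_trans hold ?_
      rw [Fin.prod_univ_four]
      simp only [hf, he, Matrix.cons_val_zero, Matrix.cons_val_one, Matrix.head_cons,
        Matrix.cons_val_two, Matrix.tail_cons, Matrix.cons_val_three]
      have hIu : (∫⁻ x, (‖u x‖₊ : ℝ≥0∞) ^ s ∂ν) ^ (1 / s : ℝ) ≤ A := by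
        rw [hA, eLpNorm_eq_lintegral_rpow_enorm_toReal hp0 hpt, hpto]
        exact ENNReal.rpow_le_rpow (setLIntegral_le_lintegral _ _) (by positivity)
      have hIθ : (∫⁻ x, (‖θ x‖₊ : ℝ≥0∞) ^ s ∂ν) ^ (1 / s : ℝ) = B := by
        rw [hB, eLpNorm_eq_lintegral_rpow_enorm_toReal hp0 hpt, hpto]
        rfl
      have hIone : (∫⁻ _, (1 : ℝ≥0∞) ∂ν) ^ (1 / (n : ℝ)) ≤ ENNReal.ofReal R * vb := by
        rw [lintegral_one, hν, Measure.restrict_apply_univ]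
        have hsub : 𝒞 ⊆ closedBall (0 : EuclideanSpace ℝ (Fin n)) R := fun x hx => by
          simpa [mem_closedBall, dist_zero_right] using hx.2
        have h1 : volume 𝒞 ≤ ENNReal.ofReal (R ^ n) * volume (ball (0 : EuclideanSpace ℝ (Fin n)) 1) := by
          calc volume 𝒞 ≤ volume (closedBall (0 : EuclideanSpace ℝ (Fin n)) R) :=
              measure_mono hsub
            _ = ENNReal.ofReal (R ^ Module.finrank ℝ (EuclideanSpace ℝ (Fin n)))
                * volume (ball (0 : EuclideanSpace ℝ (Fin n)) 1) :=
                Measure.addHaar_closedBall _ _ hR0.le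
            _ = ENNReal.ofReal (R ^ n)
                * volume (ball (0 : EuclideanSpace ℝ (Fin n)) 1) := by
                rw [finrank_euclideanSpace_fin]
        calc volume 𝒞 ^ (1 / (n : ℝ))
            ≤ (ENNReal.ofReal (R ^ n) * volume (ball (0 : EuclideanSpace ℝ (Fin n)) 1))
              ^ (1 / (n : ℝ)) := ENNReal.rpow_le_rpow h1 (by positivity)
          _ = ENNReal.ofReal (R ^ n) ^ (1 / (n : ℝ)) * vb :=
              ENNReal.mul_rpow_of_nonneg _ _ (by positivity)
          _ = ENNReal.ofReal R * vb := by
              congr 1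
              rw [ENNReal.ofReal_pow hR0.le, ← ENNReal.rpow_natCast (ENNReal.ofReal R) n,
                ← ENNReal.rpow_mul, mul_one_div_cancel (by positivity : (n : ℝ) ≠ 0),
                ENNReal.rpow_one]
      rw [hIθ]
      gcongr
    -- pointwise bound of the integrand
    have hFbound : ∀ x, (‖θ x ^ 2 * ⟪u x, gradient (fun y => φ (R⁻¹ • y)) x⟫‖₊ : ℝ≥0∞)
        ≤ ENNReal.ofReal (R⁻¹ * M)
          * 𝒞.indicator (fun x => (‖u x‖₊ : ℝ≥0∞) * ((‖θ x‖₊ : ℝ≥0∞) * (‖θ x‖₊ : ℝ≥0∞))) x := by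
      intro x
      by_cases hx : x ∈ 𝒞
      · rw [Set.indicator_of_mem hx]
        have h1 : ‖⟪u x, gradient (fun y => φ (R⁻¹ • y)) x⟫‖ ≤ ‖u x‖ * (R⁻¹ * M) :=
          le_trans (norm_inner_le_norm _ _)
            (mul_le_mul_of_nonneg_left (hgb x) (norm_nonneg _))
        have h2 : ‖θ x ^ 2 * ⟪u x, gradient (fun y => φ (R⁻¹ • y)) x⟫‖
            ≤ (R⁻¹ * M) * (‖u x‖ * (‖θ x‖ * ‖θ x‖)) := by
          calc ‖θ x ^ 2 * ⟪u x, gradient (fun y => φ (R⁻¹ • y)) x⟫‖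
              = ‖θ x‖ ^ 2 * ‖⟪u x, gradient (fun y => φ (R⁻¹ • y)) x⟫‖ := by
                rw [norm_mul, norm_pow]
            _ ≤ ‖θ x‖ ^ 2 * (‖u x‖ * (R⁻¹ * M)) :=
                mul_le_mul_of_nonneg_left h1 (by positivity)
            _ = (R⁻¹ * M) * (‖u x‖ * (‖θ x‖ * ‖θ x‖)) := by ring
        calc (‖θ x ^ 2 * ⟪u x, gradient (fun y => φ (R⁻¹ • y)) x⟫‖₊ : ℝ≥0∞)
            = ENNReal.ofReal ‖θ x ^ 2 * ⟪u x, gradient (fun y => φ (R⁻¹ • y)) x⟫‖ :=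
              (ofReal_norm _).symm
          _ ≤ ENNReal.ofReal ((R⁻¹ * M) * (‖u x‖ * (‖θ x‖ * ‖θ x‖))) :=
              ENNReal.ofReal_le_ofReal h2
          _ = ENNReal.ofReal (R⁻¹ * M)
              * ((‖u x‖₊ : ℝ≥0∞) * ((‖θ x‖₊ : ℝ≥0∞) * (‖θ x‖₊ : ℝ≥0∞))) := by
              rw [ENNReal.ofReal_mul (by positivity : (0:ℝ) ≤ R⁻¹ * M),
                ENNReal.ofReal_mul (norm_nonneg (u x)),
                ENNReal.ofReal_mul (norm_nonneg (θ x))]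
              simp only [ofReal_norm, enorm_eq_nnnorm]
      · rw [Set.indicator_of_notMem hx, mul_zero]
        have hx' : ‖x‖ < R / 2 ∨ R < ‖x‖ := by
          rw [h𝒞, Set.mem_setOf_eq, not_and_or, not_le, not_le] at hx
          exact hx
        rw [hgz x hx', inner_zero_right, mul_zero]
        simp
    -- the lintegral estimate
    have htop : ENNReal.ofReal C * (A * B ^ 2) < ⊤ := by
      apply ENNReal.mul_lt_top ENNReal.ofReal_lt_top
      exact ENNReal.mul_lt_top hA_ne.lt_top (ENNReal.pow_lt_top hB_ne.lt_top)
    have hlint : ∫⁻ x, (‖θ x ^ 2 * ⟪u x, gradient (fun y => φ (R⁻¹ • y)) x⟫‖₊ : ℝ≥0∞) ∂volume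
        ≤ ENNReal.ofReal C * (A * B ^ 2) := by
      calc ∫⁻ x, (‖θ x ^ 2 * ⟪u x, gradient (fun y => φ (R⁻¹ • y)) x⟫‖₊ : ℝ≥0∞) ∂volume
          ≤ ∫⁻ x, ENNReal.ofReal (R⁻¹ * M)
              * 𝒞.indicator (fun x => (‖u x‖₊ : ℝ≥0∞) * ((‖θ x‖₊ : ℝ≥0∞) * (‖θ x‖₊ : ℝ≥0∞))) x
            ∂volume := lintegral_mono hFbound
        _ = ENNReal.ofReal (R⁻¹ * M)
            * ∫⁻ x, (‖u x‖₊ : ℝ≥0∞) * ((‖θ x‖₊ : ℝ≥0∞) * (‖θ x‖₊ : ℝ≥0∞)) ∂ν := by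
            rw [lintegral_const_mul' _ _ ENNReal.ofReal_ne_top, lintegral_indicator h𝒞m]
        _ ≤ ENNReal.ofReal (R⁻¹ * M) * (A * B * B * (ENNReal.ofReal R * vb)) := by
            gcongr
        _ = (ENNReal.ofReal (R⁻¹ * M) * ENNReal.ofReal R * vb) * (A * B ^ 2) := by ring
        _ ≤ ENNReal.ofReal C * (A * B ^ 2) := by
            gcongr
            rw [← ENNReal.ofReal_mul (by positivity)]
            have hval : R⁻¹ * M * R = M := by field_simp
            rw [hval, ← ENNReal.ofReal_toReal hvb_ne, ← ENNReal.ofReal_mul hM0]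
            apply ENNReal.ofReal_le_ofReal
            rw [hC]
            linarith
    have hmeasF : AEStronglyMeasurable
        (fun x => θ x ^ 2 * ⟪u x, gradient (fun y => φ (R⁻¹ • y)) x⟫) volume :=
      (hθ.1.pow 2).mul (hu.1.inner hgc.aestronglyMeasurable)
    have hint : Integrable
        (fun x => θ x ^ 2 * ⟪u x, gradient (fun y => φ (R⁻¹ • y)) x⟫) volume :=
      ⟨hmeasF, lt_of_le_of_lt hlint htop⟩
    refine ⟨hint, ?_⟩
    rw [← Real.norm_eq_abs]
    refine le_trans (norm_integral_le_lintegral_norm _) ?_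
    have heq : (fun x => ENNReal.ofReal ‖θ x ^ 2 * ⟪u x, gradient (fun y => φ (R⁻¹ • y)) x⟫‖)
        = fun x => (‖θ x ^ 2 * ⟪u x, gradient (fun y => φ (R⁻¹ • y)) x⟫‖₊ : ℝ≥0∞) := by
      funext x; exact ofReal_norm _
    rw [heq]
    refine le_trans (ENNReal.toReal_mono htop.ne hlint) ?_
    rw [ENNReal.toReal_mul, ENNReal.toReal_ofReal hCpos.le, ENNReal.toReal_mul,
      ENNReal.toReal_pow]
    exact le_of_eq (by ring)
  refine ⟨⟨C, hCpos, key⟩, ?_⟩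
  -- the vanishing of the integral as R → ∞
  have hθs_fin : ∫⁻ x, (‖θ x‖₊ : ℝ≥0∞) ^ s ∂volume ≠ ⊤ := by
    have h1 := hθ.2
    rw [eLpNorm_eq_lintegral_rpow_enorm_toReal hp0 hpt, hpto] at h1
    exact ((ENNReal.rpow_lt_top_iff_of_pos (by positivity)).mp h1).ne
  set ν' : Measure (EuclideanSpace ℝ (Fin n)) :=
    volume.withDensity (fun x => (‖θ x‖₊ : ℝ≥0∞) ^ s) with hν'
  haveI : IsFiniteMeasure ν' := isFiniteMeasure_withDensity hθs_fin
  have htend1 : Tendsto (fun R : ℝ => ν' {x | R / 2 ≤ ‖x‖}) atTop (nhds 0) := by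
    have h := (aux_tendsto_measure_norm_ge ν').comp
      (Tendsto.atTop_div_const two_pos (tendsto_id (α := ℝ) (x := atTop)))
    exact h
  have hbR : ∀ R : ℝ, (eLpNorm θ p (volume.restrict
      {x : EuclideanSpace ℝ (Fin n) | R / 2 ≤ ‖x‖ ∧ ‖x‖ ≤ R})).toReal
      ≤ ((ν' {x | R / 2 ≤ ‖x‖}).toReal) ^ (1 / s : ℝ) := by
    intro R
    rw [eLpNorm_eq_lintegral_rpow_enorm_toReal hp0 hpt, hpto, ENNReal.toReal_rpow]
    apply ENNReal.toReal_mono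
    · exact (ENNReal.rpow_lt_top_of_nonneg (by positivity) (measure_ne_top ν' _)).ne
    · refine ENNReal.rpow_le_rpow ?_ (by positivity)
      rw [hν', withDensity_apply _ (measurableSet_le measurable_const measurable_norm)]
      exact lintegral_mono_set (fun x hx => hx.1)
  have htendb : Tendsto (fun R : ℝ => (eLpNorm θ p (volume.restrict
      {x : EuclideanSpace ℝ (Fin n) | R / 2 ≤ ‖x‖ ∧ ‖x‖ ≤ R})).toReal) atTop (nhds 0) := by
    apply squeeze_zero (fun R => ENNReal.toReal_nonneg) hbR
    have h1 : Tendsto (fun R : ℝ => (ν' {x | R / 2 ≤ ‖x‖}).toReal) atTop (nhds 0) := by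
      have h := (ENNReal.tendsto_toReal (a := 0) (by simp)).comp htend1
      exact h
    have h2 : Tendsto (fun y : ℝ => y ^ (1 / s : ℝ)) (nhds 0) (nhds 0) := by
      have h := (Real.continuousAt_rpow_const 0 (1 / s) (Or.inr (by positivity))).tendsto
      simpa [one_div, Real.zero_rpow (show (s : ℝ)⁻¹ ≠ 0 by positivity)] using h
    exact h2.comp h1
  rw [tendsto_zero_iff_abs_tendsto_zero]
  apply squeeze_zero' (Filter.Eventually.of_forall fun R => abs_nonneg _)
  · filter_upwards [eventually_gt_atTop (1 : ℝ)] with R hR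
    exact (key R hR).2
  · have h1 : Tendsto (fun R : ℝ => C * (eLpNorm u p volume).toReal
        * (eLpNorm θ p (volume.restrict
          {x : EuclideanSpace ℝ (Fin n) | R / 2 ≤ ‖x‖ ∧ ‖x‖ ≤ R})).toReal ^ 2)
        atTop (nhds 0) := by
      have h2 := (htendb.pow 2).const_mul (C * (eLpNorm u p volume).toReal)
      simpa [mul_assoc] using h2
    exact h1
end
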